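/- arXiv:math/0604327 — 2 statements merged into one kernel-verified Lean document; each statement's English description precedes it below -/
import Mathlib

section
/- Let T > 0, n, k ∈ ℕ, and let U = ℝᵏ. Let F₁ : [0,T] × ℝⁿ × ℝᵏ → ℝⁿ be continuous and sublinear in the control, i.e. there is C > 0 with ‖F₁(t,x,z)‖ ≤ C·(1 + ‖z‖) for all (t,x,z). Let the running cost have the form l(t,x,z) = g(x) + h(z), where g : ℝⁿ → ℝ is continuous and bounded, and h : ℝᵏ → ℝ is continuous with h(z)/‖z‖ → +∞ as ‖z‖ → +∞. Then the Hamiltonian H⁰(t,x,p) := inf_{z ∈ ℝᵏ} ( ⟨F₁(t,x,z), p⟩ + g(x) + h(z) ) is a well-defined (finite) real number for every (t,x,p) ∈ [0,T] × ℝⁿ × ℝⁿ, and H⁰ is continuous on [0,T] × ℝⁿ × ℝⁿ. -/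
open scoped RealInnerProductSpace

lemma cont_inf_aux {X Y : Type*} [TopologicalSpace X] [TopologicalSpace Y]
    [CompactSpace Y] [Nonempty Y] {f : X × Y → ℝ} (hf : Continuous f) :
    Continuous fun x => ⨅ y, f (x, y) := by
  rw [continuous_iff_continuousAt]
  intro x₀
  have hc : ∀ x : X, Continuous fun y => f (x, y) := fun x => hf.comp (Continuous.prodMk_right x)
  have hbdd : ∀ x, BddBelow (Set.range fun y => f (x, y)) := fun x =>
    (isCompact_range (hc x)).bddBelow
  unfold ContinuousAt
  rw [tendsto_order]
  constructor
  · intro b hb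
    obtain ⟨b', hbb', hb'⟩ := exists_between hb
    have hopen : IsOpen {q : X × Y | b' < f q} := isOpen_lt continuous_const hf
    have hsub : ({x₀} ×ˢ (Set.univ : Set Y)) ⊆ {q | b' < f q} := by
      rintro ⟨x, y⟩ ⟨hx, -⟩
      simp only [Set.mem_singleton_iff] at hx
      cases hx
      exact lt_of_lt_of_le hb' (ciInf_le (hbdd _) y)
    obtain ⟨u, v, hu, hv, hxu, hyv, huv⟩ :=
      generalized_tube_lemma isCompact_singleton isCompact_univ hopen hsub
    filter_upwards [hu.mem_nhds (hxu rfl)] with x hx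
    refine lt_of_lt_of_le hbb' (le_ciInf fun y => ?_)
    exact (huv ⟨hx, hyv (Set.mem_univ y)⟩).le
  · intro b hb
    obtain ⟨y₀, -, hy₀⟩ := isCompact_univ.exists_isMinOn Set.univ_nonempty
      (hc x₀).continuousOn
    have heq : (⨅ y, f (x₀, y)) = f (x₀, y₀) :=
      le_antisymm (ciInf_le (hbdd x₀) y₀) (le_ciInf fun y => hy₀ (Set.mem_univ y))
    have hca : ContinuousAt (fun x => f (x, y₀)) x₀ :=
      (hf.comp (continuous_id.prodMk continuous_const)).continuousAt
    have hb' : f (x₀, y₀) < b := by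
      have : (fun x => ⨅ y, f (x, y)) x₀ = ⨅ y, f (x₀, y) := rfl
      rw [this, heq] at hb
      exact hb
    filter_upwards [hca.eventually_lt_const hb'] with x hx
    exact lt_of_le_of_lt (ciInf_le (hbdd x) y₀) hx

/-- with unbounded control space `U = ℝᵏ`, a continuous drift `F₁`
sublinear in the control, and a running cost `l(t,x,z) = g(x) + h(z)` with `g`
continuous and bounded and `h` continuous and superlinear (`h(z)/‖z‖ → +∞` as
`‖z‖ → +∞`), the Hamiltonian
`H⁰(t,x,p) = inf_{z ∈ ℝᵏ} (⟨F₁(t,x,z),p⟩ + g(x) + h(z))` is well defined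
(each infimum is over a family bounded below) and continuous on `[0,T] × ℝⁿ × ℝⁿ`. -/
theorem stmt_3 {n k : ℕ} (T : ℝ) (hT : 0 < T) (C : ℝ) (hC : 0 < C)
    (F₁ : Set.Icc (0:ℝ) T × EuclideanSpace ℝ (Fin n) × EuclideanSpace ℝ (Fin k)
      → EuclideanSpace ℝ (Fin n))
    (g : EuclideanSpace ℝ (Fin n) → ℝ) (h : EuclideanSpace ℝ (Fin k) → ℝ)
    (hF₁c : Continuous F₁)
    (hF₁sub : ∀ (t : Set.Icc (0:ℝ) T) (x : EuclideanSpace ℝ (Fin n))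
      (z : EuclideanSpace ℝ (Fin k)), ‖F₁ (t, x, z)‖ ≤ C * (1 + ‖z‖))
    (hg : Continuous g) (hgbdd : ∃ Mg : ℝ, ∀ x, |g x| ≤ Mg)
    (hh : Continuous h)
    (hhsuper : Filter.Tendsto (fun z : EuclideanSpace ℝ (Fin k) => h z / ‖z‖)
      (Filter.comap norm Filter.atTop) Filter.atTop) :
    (∀ (t : Set.Icc (0:ℝ) T) (x p : EuclideanSpace ℝ (Fin n)),
      BddBelow (Set.range fun z : EuclideanSpace ℝ (Fin k) =>
        ⟪F₁ (t, x, z), p⟫ + g x + h z)) ∧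
    Continuous (fun txp : Set.Icc (0:ℝ) T × EuclideanSpace ℝ (Fin n) × EuclideanSpace ℝ (Fin n) =>
      ⨅ z : EuclideanSpace ℝ (Fin k),
        (⟪F₁ (txp.1, txp.2.1, z), txp.2.2⟫ + g txp.2.1 + h z)) := by
  -- superlinear lower bound for h
  have hlin : ∀ A : ℝ, ∃ B : ℝ, ∀ z, A * ‖z‖ - B ≤ h z := by
    intro A
    have hev := hhsuper.eventually (Filter.eventually_ge_atTop (|A|))
    rw [Filter.eventually_comap] at hev
    obtain ⟨S, hS⟩ := Filter.eventually_atTop.mp hev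
    set S' := max S 1 with hS'def
    have hS'1 : (1:ℝ) ≤ S' := le_max_right S 1
    obtain ⟨z₀, hz₀mem, hz₀⟩ :=
      (isCompact_closedBall (0 : EuclideanSpace ℝ (Fin k)) S').exists_isMinOn
        ⟨0, Metric.mem_closedBall_self (by linarith)⟩ hh.continuousOn
    refine ⟨max (|A| * S' - h z₀) 0, fun z => ?_⟩
    by_cases hz : ‖z‖ ≤ S'
    · have h1 : h z₀ ≤ h z := hz₀ (by simpa [Metric.mem_closedBall, dist_zero_right] using hz)
      have h2 : A * ‖z‖ ≤ |A| * S' := by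
        calc A * ‖z‖ ≤ |A| * ‖z‖ := mul_le_mul_of_nonneg_right (le_abs_self A) (norm_nonneg z)
          _ ≤ |A| * S' := mul_le_mul_of_nonneg_left hz (abs_nonneg A)
      have h3 := le_max_left (|A| * S' - h z₀) 0
      linarith
    · push_neg at hz
      have hpos : (0:ℝ) < ‖z‖ := lt_of_lt_of_le one_pos (le_trans hS'1 hz.le)
      have hdiv : |A| ≤ h z / ‖z‖ := hS ‖z‖ (le_trans (le_max_left S 1) hz.le) z rfl
      have h3 : |A| * ‖z‖ ≤ h z := by
        rw [le_div_iff₀ hpos] at hdiv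
        exact hdiv
      have h2 : A * ‖z‖ ≤ |A| * ‖z‖ :=
        mul_le_mul_of_nonneg_right (le_abs_self A) (norm_nonneg z)
      have h4 := le_max_right (|A| * S' - h z₀) 0
      linarith
  -- inner product lower/upper bounds
  have hip : ∀ (t : Set.Icc (0:ℝ) T) (x : EuclideanSpace ℝ (Fin n))
      (p : EuclideanSpace ℝ (Fin n)) (z : EuclideanSpace ℝ (Fin k)),
      |⟪F₁ (t, x, z), p⟫| ≤ C * (1 + ‖z‖) * ‖p‖ := by
    intro t x p z
    calc |⟪F₁ (t, x, z), p⟫| ≤ ‖F₁ (t, x, z)‖ * ‖p‖ := abs_real_inner_le_norm _ _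
      _ ≤ C * (1 + ‖z‖) * ‖p‖ :=
        mul_le_mul_of_nonneg_right (hF₁sub t x z) (norm_nonneg p)
  -- Part 1: BddBelow
  have part1 : ∀ (t : Set.Icc (0:ℝ) T) (x p : EuclideanSpace ℝ (Fin n)),
      BddBelow (Set.range fun z : EuclideanSpace ℝ (Fin k) =>
        ⟪F₁ (t, x, z), p⟫ + g x + h z) := by
    intro t x p
    obtain ⟨B, hB⟩ := hlin (C * ‖p‖)
    refine ⟨g x - C * ‖p‖ - B, ?_⟩
    rintro _ ⟨z, rfl⟩
    have h1 := hip t x p z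
    have h2 := hB z
    have h3 := neg_abs_le (⟪F₁ (t, x, z), p⟫ : ℝ)
    have e1 : C * (1 + ‖z‖) * ‖p‖ = C * ‖p‖ + C * ‖p‖ * ‖z‖ := by ring
    show g x - C * ‖p‖ - B ≤ ⟪F₁ (t, x, z), p⟫ + g x + h z
    linarith
  refine ⟨part1, ?_⟩
  -- Part 2: continuity
  rw [continuous_iff_continuousAt]
  intro a₀
  set P : ℝ := ‖a₀.2.2‖ + 1 with hPdef
  have hP0 : 0 < P := by positivity
  obtain ⟨B, hB⟩ := hlin (C * P + C)
  set R : ℝ := 2 * P + (|B| + |h 0|) / C + 1 with hRdef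
  have hR0 : 0 ≤ R := by positivity
  have hKc : IsCompact (Metric.closedBall (0 : EuclideanSpace ℝ (Fin k)) R) :=
    isCompact_closedBall _ _
  haveI : CompactSpace (Metric.closedBall (0 : EuclideanSpace ℝ (Fin k)) R) :=
    isCompact_iff_compactSpace.mp hKc
  haveI : Nonempty (Metric.closedBall (0 : EuclideanSpace ℝ (Fin k)) R) :=
    ⟨⟨0, Metric.mem_closedBall_self hR0⟩⟩
  -- the restricted function
  set F :=
    fun q : (Set.Icc (0:ℝ) T × EuclideanSpace ℝ (Fin n) × EuclideanSpace ℝ (Fin n)) × Metric.closedBall (0 : EuclideanSpace ℝ (Fin k)) R => ⟪F₁ (q.1.1, q.1.2.1, (q.2 : EuclideanSpace ℝ (Fin k))), q.1.2.2⟫ + g q.1.2.1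
      + h (q.2 : EuclideanSpace ℝ (Fin k)) with hFdef
  have hFc : Continuous F := by
    apply Continuous.add
    apply Continuous.add
    · exact (hF₁c.comp ((continuous_fst.fst).prodMk
        ((continuous_fst.snd.fst).prodMk (continuous_subtype_val.comp continuous_snd)))).inner
        continuous_fst.snd.snd
    · exact hg.comp continuous_fst.snd.fst
    · exact hh.comp (continuous_subtype_val.comp continuous_snd)
  have hGc : Continuous fun a : Set.Icc (0:ℝ) T × EuclideanSpace ℝ (Fin n) × EuclideanSpace ℝ (Fin n) => ⨅ zK, F (a, zK) := cont_inf_aux hFc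
  -- eventual equality
  have hev : ∀ᶠ a : Set.Icc (0:ℝ) T × EuclideanSpace ℝ (Fin n) × EuclideanSpace ℝ (Fin n) in nhds a₀, ‖a.2.2‖ ≤ P := by
    have hca : ContinuousAt (fun a : Set.Icc (0:ℝ) T × EuclideanSpace ℝ (Fin n) × EuclideanSpace ℝ (Fin n) => ‖a.2.2‖) a₀ :=
      (continuous_snd.snd.norm).continuousAt
    have : ‖a₀.2.2‖ < P := by rw [hPdef]; linarith
    filter_upwards [hca.eventually_lt_const this] with a ha using ha.le
  have heq : ∀ a : Set.Icc (0:ℝ) T × EuclideanSpace ℝ (Fin n) × EuclideanSpace ℝ (Fin n), ‖a.2.2‖ ≤ P →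
      (⨅ z : EuclideanSpace ℝ (Fin k),
        (⟪F₁ (a.1, a.2.1, z), a.2.2⟫ + g a.2.1 + h z)) = ⨅ zK, F (a, zK) := by
    intro a hp
    obtain ⟨t, x, p⟩ := a
    have hpP : ‖p‖ ≤ P := hp
    have hdom : ∀ z : EuclideanSpace ℝ (Fin k),
        ∃ zK : Metric.closedBall (0 : EuclideanSpace ℝ (Fin k)) R,
          ⟪F₁ (t, x, (zK : EuclideanSpace ℝ (Fin k))), p⟫ + g x
            + h (zK : EuclideanSpace ℝ (Fin k)) ≤ ⟪F₁ (t, x, z), p⟫ + g x + h z := by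
      intro z
      by_cases hz : ‖z‖ ≤ R
      · exact ⟨⟨z, by simpa [Metric.mem_closedBall, dist_zero_right] using hz⟩, le_refl _⟩
      · push_neg at hz
        refine ⟨⟨0, Metric.mem_closedBall_self hR0⟩, ?_⟩
        simp only
        have h1 : |⟪F₁ (t, x, z), p⟫| ≤ C * (1 + ‖z‖) * P := by
          refine (hip t x p z).trans ?_
          exact mul_le_mul_of_nonneg_left hpP (by positivity)
        have h2 : |⟪F₁ (t, x, (0 : EuclideanSpace ℝ (Fin k))), p⟫| ≤ C * P := by
          have := (hip t x p 0).trans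
            (mul_le_mul_of_nonneg_left hpP (by positivity))
          simpa using this
        have h3 := hB z
        have h4 : C * R ≤ C * ‖z‖ := mul_le_mul_of_nonneg_left hz.le hC.le
        have h5 : C * R = 2 * C * P + (|B| + |h 0|) + C := by
          rw [hRdef]
          field_simp
        have e1 : C * (1 + ‖z‖) * P = C * P + C * P * ‖z‖ := by ring
        have e2 : (C * P + C) * ‖z‖ = C * P * ‖z‖ + C * ‖z‖ := by ring
        have h6 := abs_nonneg B
        have h7 := le_abs_self B
        have h8 := le_abs_self (h 0)
        have h9 := neg_abs_le (⟪F₁ (t, x, z), p⟫)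
        have h10 := le_abs_self (⟪F₁ (t, x, (0 : EuclideanSpace ℝ (Fin k))), p⟫)
        linarith
    have hbddK : BddBelow (Set.range fun zK : Metric.closedBall (0 : EuclideanSpace ℝ (Fin k)) R
        => F ((t, x, p), zK)) := by
      apply IsCompact.bddBelow
      apply isCompact_range
      exact hFc.comp (Continuous.prodMk_right _)
    refine le_antisymm (le_ciInf fun zK => ciInf_le (part1 t x p) _) (le_ciInf fun z => ?_)
    obtain ⟨zK, hzK⟩ := hdom z
    exact (ciInf_le hbddK zK).trans hzK
  have heqev : (fun a : Set.Icc (0:ℝ) T × EuclideanSpace ℝ (Fin n) × EuclideanSpace ℝ (Fin n) => ⨅ z : EuclideanSpace ℝ (Fin k),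
      (⟪F₁ (a.1, a.2.1, z), a.2.2⟫ + g a.2.1 + h z)) =ᶠ[nhds a₀]
      (fun a : Set.Icc (0:ℝ) T × EuclideanSpace ℝ (Fin n) × EuclideanSpace ℝ (Fin n) => ⨅ zK, F (a, zK)) := by
    filter_upwards [hev] with a ha using heq a ha
  exact (hGc.continuousAt).congr heqev.symm
end

section
/- Let η ∈ (0,1), α, β ∈ ℝ, T > 0, and set λ := ½β²η(1+η) − α(1+η). Let a : [0,T] → ℝ be differentiable with a(t) > 0 for all t, a(T) = 1, and a'(t) = −λ·a(t) − η·a(t)^{(1+η)/η} on [0,T]. Define v(t,x) := a(t)·x^{1+η} for t ∈ [0,T], x > 0. Then for every t ∈ [0,T] and x > 0: the partial derivatives ∂ₜv(t,x) = a'(t)·x^{1+η}, ∂ₓv(t,x) = a(t)(1+η)·x^{η}, ∂ₓₓv(t,x) = a(t)(1+η)η·x^{η−1} exist, the terminal condition v(T,x) = x^{1+η} holds, and v satisfies the Hamilton-Jacobi-Bellman equation ∂ₜv(t,x) + ½β²x²·∂ₓₓv(t,x) − αx·∂ₓv(t,x) + η·( max(∂ₓv(t,x),0)/(1+η) )^{(1+η)/η}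 = 0. -/
/-- verification that `v(t,x) = a(t)·x^{1+η}` solves, for `x > 0`, the
HJB equation `∂ₜv + ½β²x²∂ₓₓv − αx∂ₓv + η·(max(∂ₓv,0)/(1+η))^{(1+η)/η} = 0` with
terminal datum `x^{1+η}`, where `a` solves `a' = −λa − η·a^{(1+η)/η}`, `a(T) = 1`,
`a > 0`, and `λ = ½β²η(1+η) − α(1+η)`.  The partial derivatives of `v` are
computed explicitly: `∂ₜv = a'(t)x^{1+η}`, `∂ₓv = a(t)(1+η)x^η`,
`∂ₓₓv = a(t)(1+η)ηx^{η−1}`. -/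
theorem stmt_9 (η α β T : ℝ) (hη : η ∈ Set.Ioo (0:ℝ) 1) (hT : 0 < T)
    (a : ℝ → ℝ)
    (ha_pos : ∀ t ∈ Set.Icc (0:ℝ) T, 0 < a t)
    (ha_T : a T = 1)
    (ha_ode : ∀ t ∈ Set.Icc (0:ℝ) T,
      HasDerivAt a
        (-((1/2) * β^2 * η * (1+η) - α * (1+η)) * a t - η * (a t) ^ ((1+η)/η)) t) :
    ∀ t ∈ Set.Icc (0:ℝ) T, ∀ x : ℝ, 0 < x →
      -- ∂ₜv(t,x) exists and equals a'(t)·x^{1+η}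
      HasDerivAt (fun s => a s * x ^ (1+η))
        ((-((1/2) * β^2 * η * (1+η) - α * (1+η)) * a t - η * (a t) ^ ((1+η)/η))
          * x ^ (1+η)) t ∧
      -- ∂ₓv(t,x) exists and equals a(t)(1+η)·x^η
      HasDerivAt (fun y : ℝ => a t * y ^ (1+η)) (a t * (1+η) * x ^ η) x ∧
      -- ∂ₓₓv(t,x) exists and equals a(t)(1+η)η·x^{η−1}
      HasDerivAt (fun y : ℝ => a t * (1+η) * y ^ η) (a t * (1+η) * η * x ^ (η-1)) x ∧
      -- terminal condition v(T,x) = x^{1+η}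
      a T * x ^ (1+η) = x ^ (1+η) ∧
      -- the Hamilton-Jacobi-Bellman equation
      (-((1/2) * β^2 * η * (1+η) - α * (1+η)) * a t - η * (a t) ^ ((1+η)/η)) * x ^ (1+η)
        + (1/2) * β^2 * x^2 * (a t * (1+η) * η * x ^ (η-1))
        - α * x * (a t * (1+η) * x ^ η)
        + η * (max (a t * (1+η) * x ^ η) 0 / (1+η)) ^ ((1+η)/η) = 0 := by
  obtain ⟨hη0, hη1⟩ := hη
  intro t ht x hx
  have hx0 : x ≠ 0 := ne_of_gt hx
  have h1η : (0:ℝ) < 1 + η := by linarith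
  have hat := ha_pos t ht
  refine ⟨(ha_ode t ht).mul_const _, ?_, ?_, by rw [ha_T, one_mul], ?_⟩
  · have h := (Real.hasDerivAt_rpow_const (x := x) (p := 1 + η) (Or.inl hx0)).const_mul (a t)
    simpa [add_sub_cancel_left, mul_assoc, mul_comm, mul_left_comm] using h
  · have h := (Real.hasDerivAt_rpow_const (x := x) (p := η) (Or.inl hx0)).const_mul (a t * (1+η))
    simpa [mul_assoc, mul_comm, mul_left_comm] using h
  · have hmax : max (a t * (1+η) * x ^ η) 0 = a t * (1+η) * x ^ η := by
      apply max_eq_left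
      positivity
    rw [hmax]
    have hdiv : a t * (1+η) * x ^ η / (1+η) = a t * x ^ η := by
      field_simp
    rw [hdiv]
    have hpow : (a t * x ^ η) ^ ((1+η)/η) = (a t) ^ ((1+η)/η) * x ^ (1+η) := by
      rw [Real.mul_rpow hat.le (Real.rpow_nonneg hx.le η), ← Real.rpow_mul hx.le,
        mul_div_cancel₀ _ (ne_of_gt hη0)]
    rw [hpow]
    have hxx : x^2 * x ^ (η-1) = x ^ (1+η) := by
      rw [← Real.rpow_natCast x 2, ← Real.rpow_add hx]
      congr 1; push_cast; ring
    have hxx2 : x * x ^ η = x ^ (1+η) := by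
      nth_rewrite 1 [← Real.rpow_one x]
      rw [← Real.rpow_add hx]
    linear_combination (1/2*β^2*a t*(1+η)*η) * hxx - (α * a t * (1+η)) * hxx2
end
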